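/- arXiv:1405.4396 — 3 statements merged into one kernel-verified Lean document; each statement's English description precedes it below -/
import Mathlib

section
/- Let k be a nonzero real number and let X be a complex number with |X| = 1. If Δ_k(X) > 0, then B_k(X) has the same sign as k (i.e., k·B_k(X) > 0). -/
/-! On the unit circle `1 / X = conj X`, so `t = X + 1 / X = 2 Re X` is real with `|t| ≤ 2`, and
`B = B_k(X) = t² + k t + 2k − 2` is real. Since `B − 2 = (t + 2)(t − 2) + k (t + 2) ≤ k (t + 2)` and
`B + 2 = t² + k (t + 2) ≥ k (t + 2)`, with `t + 2 ≥ 0`, the alternative `B > 2` or `B < −2` forced by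
`Δ_k(X) = B² − 4 > 0` gives `k > 0` or `k < 0` respectively. -/

/-- B_k(X) = (X + 1/X)² + k(X + 1/X) + 2k − 2. -/
noncomputable def Bfun (k : ℝ) (X : ℂ) : ℂ :=
  (X + 1 / X) ^ 2 + (k : ℂ) * (X + 1 / X) + 2 * (k : ℂ) - 2

/-- Δ_k(X) = B_k(X)² − 4. -/
noncomputable def Δfun (k : ℝ) (X : ℂ) : ℂ := Bfun k X ^ 2 - 4

/-- `B_k` as a function of the real variable `t = X + 1 / X`. -/
def realB (k t : ℝ) : ℝ := t ^ 2 + k * t + 2 * k - 2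

theorem Complex.add_one_div_eq_two_mul_re {X : ℂ} (hX : ‖X‖ = 1) :
    X + 1 / X = ((2 * X.re : ℝ) : ℂ) := by
  rw [one_div, Complex.inv_eq_conj hX, Complex.add_conj]

theorem Bfun_eq_realB (k : ℝ) {X : ℂ} (hX : ‖X‖ = 1) :
    Bfun k X = (realB k (2 * X.re) : ℂ) := by
  rw [Bfun, Complex.add_one_div_eq_two_mul_re hX, realB]
  push_cast
  ring

theorem pos_of_two_lt_realB {k t : ℝ} (ht : |t| ≤ 2) (hB : 2 < realB k t) : 0 < k := by
  obtain ⟨hlo, hhi⟩ := abs_le.mp ht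
  have hle : realB k t - 2 ≤ k * (t + 2) := by
    unfold realB; nlinarith
  exact pos_of_mul_pos_left (by linarith) (by linarith : 0 ≤ t + 2)

theorem neg_of_realB_lt_neg_two {k t : ℝ} (ht : |t| ≤ 2) (hB : realB k t < -2) : k < 0 := by
  obtain ⟨hlo, -⟩ := abs_le.mp ht
  have hge : k * (t + 2) ≤ realB k t + 2 := by
    unfold realB; nlinarith [sq_nonneg t]
  exact neg_of_mul_neg_left (by linarith) (by linarith : 0 ≤ t + 2)

theorem mul_realB_pos {k t : ℝ} (ht : |t| ≤ 2) (hB : 4 < realB k t ^ 2) : 0 < k * realB k t := by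
  have h2 : 2 < |realB k t| := by
    rw [← abs_two, ← sq_lt_sq]; norm_num [hB]
  rcases lt_abs.mp h2 with hpos | hneg
  · exact mul_pos (pos_of_two_lt_realB ht hpos) (by linarith)
  · exact mul_pos_of_neg_of_neg (neg_of_realB_lt_neg_two ht (by linarith)) (by linarith)

theorem sign_B_eq_sign_k_general (k : ℝ) (X : ℂ) (hX : ‖X‖ = 1)
    (hΔre : 0 < (Δfun k X).re) :
    0 < k * (Bfun k X).re ∧ (Bfun k X).im = 0 := by
  have hB := Bfun_eq_realB k hX
  have ht : |2 * X.re| ≤ 2 := by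
    rw [abs_mul, abs_two]
    linarith [hX ▸ Complex.abs_re_le_norm X]
  have hΔ : (Δfun k X).re = realB k (2 * X.re) ^ 2 - 4 := by
    rw [Δfun, hB, ← Complex.ofReal_pow, ← Complex.ofReal_ofNat, ← Complex.ofReal_sub,
      Complex.ofReal_re]
  rw [hB, Complex.ofReal_re, Complex.ofReal_im]
  exact ⟨mul_realB_pos ht (by linarith), rfl⟩

/-- For nonzero real `k` and `|X| = 1`: if `Δ_k(X) > 0` (it is real on the unit circle),
then `B_k(X)` (also real there) has the same sign as `k`, i.e. `k·B_k(X) > 0`. -/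
theorem sign_B_eq_sign_k (k : ℝ) (hk : k ≠ 0) (X : ℂ) (hX : ‖X‖ = 1)
    (hΔre : 0 < (Δfun k X).re) (hΔim : (Δfun k X).im = 0) :
    0 < k * (Bfun k X).re ∧ (Bfun k X).im = 0 :=
  sign_B_eq_sign_k_general k X hX hΔre
end

section
/- For every nonnegative integer n, Σ_{j+ℓ+m=n, j,ℓ,m≥0} ( n! / (j!·ℓ!·m!) )^2 = Σ_{j=0}^n C(n,j)^2 · C(2j,j), where C(a,b) denotes the binomial coefficient. -/
lemma sum_choose_sq_aux (k : ℕ) :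
    ∑ i ∈ Finset.range (k + 1), k.choose i ^ 2 = (2 * k).choose k := by
  rw [two_mul, Nat.add_choose_eq, Finset.Nat.sum_antidiagonal_eq_sum_range_succ_mk]
  refine Finset.sum_congr rfl fun i hi => ?_
  rw [Finset.mem_range] at hi
  rw [Nat.choose_symm (by omega), sq]

lemma multinomial_three_aux (a b c : ℕ) :
    Nat.multinomial Finset.univ ![a, b, c] = (a + b + c).choose a * (b + c).choose b := by
  have huniv : (Finset.univ : Finset (Fin 3)) = insert 0 {1, 2} := by decide
  rw [huniv, Nat.multinomial_insert (by decide),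
    Nat.binomial_eq_choose (by decide : (1 : Fin 3) ≠ 2)]
  simp [Finset.sum_pair (by decide : (1 : Fin 3) ≠ 2), add_assoc]

lemma multinomial_eta (f : Fin 3 → ℕ) : f = ![f 0, f 1, f 2] := by
  funext i; fin_cases i <;> rfl

/-- Σ_{j+ℓ+m=n} (n!/(j!ℓ!m!))² = Σ_{j=0}^n C(n,j)²·C(2j,j). The left-hand sum runs over
all triples of nonnegative integers summing to `n`, with the squared multinomial
coefficient as summand. -/
theorem sum_multinomial_sq_eq (n : ℕ) :
    ∑ f ∈ Finset.Nat.antidiagonalTuple 3 n, Nat.multinomial Finset.univ f ^ 2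
      = ∑ j ∈ Finset.range (n + 1), n.choose j ^ 2 * (2 * j).choose j := by
  have key : ∑ f ∈ Finset.Nat.antidiagonalTuple 3 n, Nat.multinomial Finset.univ f ^ 2
      = ∑ p ∈ (Finset.range (n + 1)).sigma (fun j => Finset.range (n - j + 1)),
          (n.choose p.1 * (n - p.1).choose p.2) ^ 2 := by
    refine Finset.sum_nbij' (fun f => ⟨f 0, f 1⟩)
      (fun p => ![p.1, p.2, n - p.1 - p.2]) ?_ ?_ ?_ ?_ ?_
    · intro f hf
      rw [Finset.Nat.mem_antidiagonalTuple, Fin.sum_univ_three] at hf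
      simp only [Finset.mem_sigma, Finset.mem_range]
      omega
    · intro p hp
      simp only [Finset.mem_sigma, Finset.mem_range] at hp
      rw [Finset.Nat.mem_antidiagonalTuple, Fin.sum_univ_three]
      simp only [Matrix.cons_val_zero, Matrix.cons_val_one, Matrix.head_cons,
        Matrix.cons_val_two, Matrix.tail_cons]
      omega
    · intro f hf
      rw [Finset.Nat.mem_antidiagonalTuple, Fin.sum_univ_three] at hf
      funext i
      fin_cases i
      · rfl
      · rfl
      · show n - f 0 - f 1 = f 2
        omega
    · intro p hp
      simp only [Finset.mem_sigma, Finset.mem_range] at hp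
      simp
    · intro f hf
      rw [Finset.Nat.mem_antidiagonalTuple, Fin.sum_univ_three] at hf
      have : Nat.multinomial Finset.univ f = (f 0 + f 1 + f 2).choose (f 0)
          * (f 1 + f 2).choose (f 1) := by
        conv_lhs => rw [multinomial_eta f]
        exact multinomial_three_aux _ _ _
      have h3 : f 1 + f 2 = n - f 0 := by omega
      rw [this, hf, h3]
  rw [key, Finset.sum_sigma]
  have step : ∀ j ∈ Finset.range (n + 1),
      ∑ l ∈ Finset.range (n - j + 1), (n.choose j * (n - j).choose l) ^ 2
        = n.choose j ^ 2 * (2 * (n - j)).choose (n - j) := by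
    intro j hj
    rw [← sum_choose_sq_aux, Finset.mul_sum]
    refine Finset.sum_congr rfl fun l hl => ?_
    rw [mul_pow]
  rw [Finset.sum_congr rfl step]
  rw [← Finset.sum_range_reflect]
  refine Finset.sum_congr rfl fun j hj => ?_
  rw [Finset.mem_range] at hj
  have h1 : n + 1 - 1 - j = n - j := by omega
  have h2 : n - (n - j) = j := by omega
  rw [h1, h2, Nat.choose_symm (by omega)]
end

section
/- Let f(z) = Σ_{n=0}^∞ a_n z^n with a_n = Σ_{j=0}^n C(n,j)^2 C(2j,j). Then for every complex z with |z| < 1/9, the series converges and f satisfies the Picard–Fuchs differential equation z(z−1)(9z−1)·f''(z) + (27z^2 − 20z + 1)·f'(z) + 3(3z − 1)·f(z) = 0. -/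
/-!
Creative telescoping (Zeilberger) produces a certificate proving the three-term recurrence
`(n+1)² a_{n+1} - (10n² + 10n + 3) a_n + 9n² a_{n-1} = 0`. The bounds `C(2j,j) ≤ 4^j` and
`∑ x_j² ≤ (∑ x_j)²` give `a_n ≤ (∑_j C(n,j) 2^j)² = 9^n`, so on `|z| < 1/9` the series and its
derivatives may be differentiated termwise. The operator sends `z^n` to
`9(n+1)² z^{n+1} - (10n² + 10n + 3) z^n + n² z^{n-1}`, so by the recurrence the series obtained
by substituting `f` telescopes to `0`.
-/

/-- a_n = Σ_{j=0}^n C(n,j)² · C(2j,j). -/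
def aseq (n : ℕ) : ℕ := ∑ j ∈ Finset.range (n + 1), n.choose j ^ 2 * (2 * j).choose j

/-- f(z) = Σ a_n zⁿ. -/
noncomputable def fPF (z : ℂ) : ℂ := ∑' n : ℕ, (aseq n : ℂ) * z ^ n

open Finset Filter Topology

theorem aseq_le_nine_pow (n : ℕ) : aseq n ≤ 9 ^ n := by
  have h3 : ∑ j ∈ range (n + 1), n.choose j * 2 ^ j = 3 ^ n := by
    simpa [mul_comm] using (add_pow (2 : ℕ) 1 n).symm
  calc aseq n ≤ ∑ j ∈ range (n + 1), (n.choose j * 2 ^ j) ^ 2 := by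
        refine sum_le_sum fun j _ => ?_
        rw [mul_pow, ← pow_mul, mul_comm j 2, pow_mul, ← Nat.centralBinom_eq_two_mul_choose]
        exact Nat.mul_le_mul_left _ (Nat.centralBinom_le_four_pow j)
    _ ≤ (∑ j ∈ range (n + 1), n.choose j * 2 ^ j) ^ 2 :=
        sum_sq_le_sq_sum_of_nonneg fun _ _ => Nat.zero_le _
    _ = 9 ^ n := by rw [h3, ← pow_mul, mul_comm, pow_mul]; norm_num

theorem Nat.cast_choose_mul_succ_eq {R : Type*} [CommRing R] (n j : ℕ) :
    (n.choose j : R) * (n + 1) = (n + 1).choose j * ((n : R) + 1 - j) := by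
  rcases le_or_gt j (n + 1) with hj | hj
  · have := congrArg (Nat.cast : ℕ → R) (Nat.choose_mul_succ_eq n j)
    push_cast [Nat.cast_sub hj] at this
    exact this
  · simp [Nat.choose_eq_zero_of_lt hj, Nat.choose_eq_zero_of_lt (Nat.lt_of_succ_lt hj)]

def aseqTerm (n j : ℕ) : ℚ := (n.choose j : ℚ) ^ 2 * (2 * j).choose j

theorem aseq_cast_eq_sum {n K : ℕ} (h : n < K) : (aseq n : ℚ) = ∑ j ∈ range K, aseqTerm n j := by
  simp only [aseq, aseqTerm, Nat.cast_sum, Nat.cast_mul, Nat.cast_pow]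
  refine sum_subset (range_subset_range.2 h) fun j _ hj => ?_
  simp [Nat.choose_eq_zero_of_lt (not_lt.1 (mt mem_range.2 hj))]

/-- The certificate produced by Zeilberger's algorithm for the summand `aseqTerm`. -/
def wzCert (n j : ℕ) : ℚ :=
  (j : ℚ) ^ 3 * (3 * j - 4 * n - 4) * ((n + 1).choose j : ℚ) ^ 2 * (2 * j).choose j / (n + 1) ^ 2

/- Every binomial coefficient involved is a rational multiple of `C(n+2, j)` or `C(2j, j)` with
denominators `n + 1`, `n + 2`, `j + 1`, so the identity holds for all `j` without case analysis. -/
theorem wz_identity (n j : ℕ) :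
    ((n : ℚ) + 2) ^ 2 * aseqTerm (n + 2) j
      - (10 * ((n : ℚ) + 1) ^ 2 + 10 * ((n : ℚ) + 1) + 3) * aseqTerm (n + 1) j
      + 9 * ((n : ℚ) + 1) ^ 2 * aseqTerm n j
      = wzCert (n + 1) (j + 1) - wzCert (n + 1) j := by
  have hn1 : (n : ℚ) + 1 ≠ 0 := by positivity
  have hn2 : (n : ℚ) + 2 ≠ 0 := by positivity
  have hj1 : (j : ℚ) + 1 ≠ 0 := by positivity
  have c1 : ((n + 1).choose j : ℚ) = ((n : ℚ) + 2 - j) / (n + 2) * (n + 2).choose j := by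
    rw [eq_comm, div_mul_eq_mul_div, div_eq_iff hn2]
    have := Nat.cast_choose_mul_succ_eq (R := ℚ) (n + 1) j
    push_cast at this
    linear_combination -this
  have c0 : (n.choose j : ℚ) = ((n : ℚ) + 1 - j) / (n + 1) * (n + 1).choose j := by
    rw [eq_comm, div_mul_eq_mul_div, div_eq_iff hn1]
    linear_combination -Nat.cast_choose_mul_succ_eq (R := ℚ) n j
  have c2 : ((n + 2).choose (j + 1) : ℚ) = ((n : ℚ) + 2) / (j + 1) * (n + 1).choose j := by
    rw [eq_comm, div_mul_eq_mul_div, div_eq_iff hj1]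
    have := congrArg (Nat.cast : ℕ → ℚ) (Nat.add_one_mul_choose_eq (n + 1) j)
    push_cast at this
    linear_combination this
  have cb : ((2 * (j + 1)).choose (j + 1) : ℚ)
      = 2 * (2 * j + 1) / (j + 1) * (2 * j).choose j := by
    rw [eq_comm, div_mul_eq_mul_div, div_eq_iff hj1]
    have := congrArg (Nat.cast : ℕ → ℚ) (Nat.succ_mul_centralBinom_succ j)
    simp only [Nat.centralBinom_eq_two_mul_choose] at this
    push_cast at this
    linear_combination -this
  simp only [aseqTerm, wzCert]
  rw [cb, c2, c0, c1]
  push_cast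
  field_simp
  ring

theorem aseq_recurrence (n : ℕ) :
    (n + 1) ^ 2 * aseq (n + 1) + 9 * n ^ 2 * aseq (n - 1)
      = (10 * n ^ 2 + 10 * n + 3) * aseq n := by
  obtain _ | m := n
  · decide
  have htel : ∑ j ∈ range (m + 3), (wzCert (m + 1) (j + 1) - wzCert (m + 1) j) = 0 := by
    rw [sum_range_sub]
    simp [wzCert]
  simp only [← wz_identity, sum_add_distrib, sum_sub_distrib, ← mul_sum,
    ← aseq_cast_eq_sum (show m + 2 < m + 3 by omega),
    ← aseq_cast_eq_sum (show m + 1 < m + 3 by omega),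
    ← aseq_cast_eq_sum (show m < m + 3 by omega)] at htel
  have hq : ((m : ℚ) + 2) ^ 2 * aseq (m + 2) + 9 * ((m : ℚ) + 1) ^ 2 * aseq m
      = (10 * ((m : ℚ) + 1) ^ 2 + 10 * ((m : ℚ) + 1) + 3) * aseq (m + 1) := by
    linear_combination htel
  simp only [Nat.add_sub_cancel]
  exact_mod_cast hq

section PowerSeries

variable {c : ℕ → ℂ} {r : ℝ}

theorem summable_norm_mul_descFactorial_mul_pow
    (hc : ∀ k : ℕ, Summable fun n : ℕ => (n : ℝ) ^ k * ‖c n‖ * r ^ n) (hr : 0 < r) (k : ℕ) :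
    Summable fun n : ℕ => ‖c n‖ * n.descFactorial k * r ^ (n - k) := by
  refine ((hc k).div_const (r ^ k)).of_nonneg_of_le (fun n => by positivity) fun n => ?_
  rcases lt_or_ge n k with h | h
  · simp only [Nat.descFactorial_eq_zero_iff_lt.2 h, Nat.cast_zero, mul_zero, zero_mul]
    positivity
  · have hd : (n.descFactorial k : ℝ) ≤ (n : ℝ) ^ k := by
      exact_mod_cast Nat.descFactorial_le_pow n k
    rw [le_div_iff₀ (by positivity), mul_assoc, ← pow_add, Nat.sub_add_cancel h, mul_comm ‖c n‖,
      mul_assoc, mul_assoc]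
    gcongr

theorem norm_mul_descFactorial_mul_pow_le (n k : ℕ) {w : ℂ} (hw : ‖w‖ ≤ r) :
    ‖c n * n.descFactorial k * w ^ (n - k)‖ ≤ ‖c n‖ * n.descFactorial k * r ^ (n - k) := by
  rw [norm_mul, norm_mul, norm_pow, Complex.norm_natCast]
  gcongr

theorem summable_natCast_pow_mul_mul_pow
    (hc : ∀ k : ℕ, Summable fun n : ℕ => (n : ℝ) ^ k * ‖c n‖ * r ^ n) {z : ℂ} (hz : ‖z‖ ≤ r)
    (k : ℕ) : Summable fun n : ℕ => (n : ℂ) ^ k * c n * z ^ n := by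
  refine (hc k).of_norm_bounded fun n => ?_
  rw [norm_mul, norm_mul, norm_pow, norm_pow, Complex.norm_natCast]
  gcongr

theorem hasSum_iteratedDeriv_tsum_mul_pow
    (hc : ∀ k : ℕ, Summable fun n : ℕ => (n : ℝ) ^ k * ‖c n‖ * r ^ n) (k : ℕ) {z : ℂ}
    (hz : ‖z‖ < r) :
    HasSum (fun n => c n * n.descFactorial k * z ^ (n - k))
      (iteratedDeriv k (fun w => ∑' n, c n * w ^ n) z) := by
  have hr : 0 < r := (norm_nonneg z).trans_lt hz
  induction k generalizing z with
  | zero =>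
    simpa [iteratedDeriv_zero] using
      (summable_natCast_pow_mul_mul_pow hc hz.le 0).hasSum
  | succ k ih =>
    have hzU : z ∈ Metric.ball (0 : ℂ) r := mem_ball_zero_iff.2 hz
    have heq : iteratedDeriv k (fun w => ∑' n, c n * w ^ n)
        =ᶠ[𝓝 z] fun w => ∑' n, c n * n.descFactorial k * w ^ (n - k) :=
      eventually_of_mem (Metric.isOpen_ball.mem_nhds hzU) fun w hw =>
        (ih (mem_ball_zero_iff.1 hw)).tsum_eq.symm
    rw [iteratedDeriv_succ, heq.deriv_eq]
    refine (Complex.hasSum_deriv_of_summable_norm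
      (summable_norm_mul_descFactorial_mul_pow hc hr k)
      (fun n => ((differentiable_pow (n - k)).const_mul _).differentiableOn) Metric.isOpen_ball
      (fun n w hw => norm_mul_descFactorial_mul_pow_le n k (mem_ball_zero_iff.1 hw).le)
      hzU).congr_fun fun n => ?_
    simp only [deriv_const_mul_field', deriv_pow_field, Nat.descFactorial_succ, Nat.sub_sub]
    push_cast
    ring

end PowerSeries

theorem Summable.hasSum_sub_succ {G : Type*} [AddCommGroup G] [TopologicalSpace G]
    [IsTopologicalAddGroup G] {g : ℕ → G} (hg : Summable g) :
    HasSum (fun n => g n - g (n + 1)) (g 0) := by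
  simpa using hg.hasSum.sub ((hasSum_nat_add_iff' 1).2 hg.hasSum)

theorem summable_pow_mul_aseq_mul_pow {r : ℝ} (hr0 : 0 ≤ r) (hr : 9 * r < 1) (k : ℕ) :
    Summable fun n : ℕ => (n : ℝ) ^ k * ‖(aseq n : ℂ)‖ * r ^ n := by
  refine (summable_pow_mul_geometric_of_norm_lt_one k (r := 9 * r) ?_).of_nonneg_of_le
    (fun n => by positivity) fun n => ?_
  · rwa [Real.norm_of_nonneg (by positivity)]
  · rw [Complex.norm_natCast, mul_pow, ← mul_assoc]
    gcongr
    exact_mod_cast aseq_le_nine_pow n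

/-- When `b` satisfies the recurrence, the Picard–Fuchs operator applied termwise to
`∑ b n * z ^ n` telescopes along this sequence. -/
noncomputable def pfTelescope (b : ℕ → ℂ) (z : ℂ) (n : ℕ) : ℂ :=
  (n : ℂ) ^ 2 * b n * z ^ (n - 1) - 9 * (n : ℂ) ^ 2 * b (n - 1) * z ^ n

theorem picardFuchs_monomial_eq_sub {b : ℕ → ℂ} {n : ℕ}
    (hb : ((n : ℂ) + 1) ^ 2 * b (n + 1) + 9 * (n : ℂ) ^ 2 * b (n - 1)
      = (10 * (n : ℂ) ^ 2 + 10 * n + 3) * b n) (z : ℂ) :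
    z * (z - 1) * (9 * z - 1) * (b n * n.descFactorial 2 * z ^ (n - 2))
        + (27 * z ^ 2 - 20 * z + 1) * (b n * n * z ^ (n - 1)) + 3 * (3 * z - 1) * (b n * z ^ n)
      = pfTelescope b z n - pfTelescope b z (n + 1) := by
  unfold pfTelescope
  obtain _ | _ | m := n
  · simp only [Nat.zero_sub, zero_add, Nat.cast_zero, Nat.cast_one] at hb ⊢
    linear_combination hb
  · simp only [Nat.sub_self, Nat.reduceAdd, Nat.reduceSub, Nat.descFactorial, Nat.cast_one,
      Nat.cast_ofNat] at hb ⊢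
    linear_combination z * hb
  · simp only [Nat.add_sub_cancel, Nat.reduceSubDiff, Nat.descFactorial, Nat.cast_add,
      Nat.cast_mul, Nat.cast_ofNat, Nat.cast_one] at hb ⊢
    linear_combination z ^ (m + 2) * hb

theorem summable_pfTelescope_aseq {z : ℂ} {r : ℝ} (hzr : ‖z‖ < r) (hr : 9 * r < 1) :
    Summable (pfTelescope (fun n => (aseq n : ℂ)) z) := by
  have hc := summable_pow_mul_aseq_mul_pow ((norm_nonneg z).trans hzr.le) hr
  -- `n ^ 2 * aₙ * z ^ (n - 1)` is the derivative series of `∑ n * aₙ * z ^ n`.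
  have hp : Summable fun n : ℕ => (n : ℂ) ^ 2 * aseq n * z ^ (n - 1) := by
    have hc' : ∀ k : ℕ, Summable fun n : ℕ => (n : ℝ) ^ k * ‖(n : ℂ) * aseq n‖ * r ^ n :=
      fun k => (hc (k + 1)).congr fun n => by simp only [norm_mul, Complex.norm_natCast]; ring
    exact (hasSum_iteratedDeriv_tsum_mul_pow hc' 1 hzr).summable.congr fun n => by
      simp only [Nat.descFactorial_one]; ring
  have hq : Summable fun n : ℕ => 9 * (n : ℂ) ^ 2 * aseq (n - 1) * z ^ n := by
    refine (summable_nat_add_iff 1).1 ?_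
    have := (((summable_natCast_pow_mul_mul_pow hc hzr.le 2).add
      ((summable_natCast_pow_mul_mul_pow hc hzr.le 1).mul_left 2)).add
      (summable_natCast_pow_mul_mul_pow hc hzr.le 0)).mul_left (9 * z)
    exact this.congr fun n => by simp only [Nat.add_sub_cancel]; push_cast; ring
  exact hp.sub hq

/-- On `|z| < 1/9` the series converges and `f` satisfies the Picard–Fuchs equation
`z(z−1)(9z−1)f'' + (27z² − 20z + 1)f' + 3(3z − 1)f = 0`. -/
theorem picardFuchs (z : ℂ) (hz : ‖z‖ < 1 / 9) :
    Summable (fun n : ℕ => (aseq n : ℂ) * z ^ n) ∧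
    z * (z - 1) * (9 * z - 1) * iteratedDeriv 2 fPF z
      + (27 * z ^ 2 - 20 * z + 1) * deriv fPF z
      + 3 * (3 * z - 1) * fPF z = 0 := by
  obtain ⟨r, hzr, hr⟩ : ∃ r, ‖z‖ < r ∧ 9 * r < 1 :=
    ⟨(‖z‖ + 1 / 9) / 2, by linarith, by linarith⟩
  have hd (k : ℕ) := hasSum_iteratedDeriv_tsum_mul_pow
    (summable_pow_mul_aseq_mul_pow ((norm_nonneg z).trans hzr.le) hr) k hzr
  have h0 := hd 0
  have h1 := hd 1
  simp only [iteratedDeriv_zero, iteratedDeriv_one, Nat.descFactorial_zero,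
    Nat.descFactorial_one, Nat.cast_one, mul_one, Nat.sub_zero] at h0 h1
  refine ⟨h0.summable, ?_⟩
  have hrec (n : ℕ) : ((n : ℂ) + 1) ^ 2 * aseq (n + 1) + 9 * (n : ℂ) ^ 2 * aseq (n - 1)
      = (10 * (n : ℂ) ^ 2 + 10 * n + 3) * aseq n := by
    exact_mod_cast aseq_recurrence n
  have htel := (summable_pfTelescope_aseq hzr hr).hasSum_sub_succ
  rw [show pfTelescope _ z 0 = 0 by simp [pfTelescope]] at htel
  exact ((((hd 2).mul_left _).add (h1.mul_left _)).add (h0.mul_left _)).unique <|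
    htel.congr_fun fun n => picardFuchs_monomial_eq_sub (b := fun n => (aseq n : ℂ)) (hrec n) z
end
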